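/- Let T be a locally finite face-to-face tiling of Euclidean d-space ℝ^d by convex d-polytopes with only finitely many congruence classes of tiles, and let n be a positive integer. Then T is n-isohedral if and only if there exists a positive integer k such that: (1) M_{k−1}(T) = M_k(T); (2) for every tile P of T, G_{k−1}(P) = G_k(P); and M_k(T) = n. -/

import Mathlib

noncomputable section
open scoped Classical

abbrev EucSp (d : ℕ) := EuclideanSpace ℝ (Fin d)

/-- `F` is a face of the convex set `P` (exposed face; includes `∅` and `P` itself). -/
def IsFaceOf {d : ℕ} (F P : Set (EucSp d)) : Prop := IsExposed ℝ P F

/-- A convex `d`-polytope: the convex hull of a finite point set, with nonempty interior. -/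
def IsPolytope (d : ℕ) (P : Set (EucSp d)) : Prop :=
  (∃ s : Finset (EucSp d), P = convexHull ℝ (s : Set (EucSp d))) ∧ (interior P).Nonempty

/-- Affine dimension of a set, the empty set having dimension `-1`. -/
def fdimZ {d : ℕ} (F : Set (EucSp d)) : ℤ :=
  if F = ∅ then -1 else (Module.finrank ℝ (affineSpan ℝ F).direction : ℤ)

/-- A locally finite face-to-face tiling of `ℝ^d` by convex `d`-polytopes. -/
structure Tiling (d : ℕ) where
  tiles : Set (Set (EucSp d))
  countable : tiles.Countable
  polytope : ∀ P ∈ tiles, IsPolytope d P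
  covers : ⋃₀ tiles = Set.univ
  disjointInteriors : ∀ P ∈ tiles, ∀ Q ∈ tiles, P ≠ Q → interior P ∩ interior Q = ∅
  locallyFinite : ∀ x : EucSp d, ∃ U ∈ nhds x, {P | P ∈ tiles ∧ (P ∩ U).Nonempty}.Finite
  faceToFace : ∀ P ∈ tiles, ∀ Q ∈ tiles, IsFaceOf (P ∩ Q) P ∧ IsFaceOf (P ∩ Q) Q

variable {d : ℕ}

/-- A sequence of `n+1` tiles from `P` to `Q` in which any two consecutive tiles meet
in a face of dimension at least `d - 2`. -/
def TileChain (T : Tiling d) (P Q : Set (EucSp d)) (n : ℕ) : Prop :=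
  ∃ f : ℕ → Set (EucSp d), f 0 = P ∧ f n = Q ∧ (∀ j ≤ n, f j ∈ T.tiles) ∧
    ∀ j, 1 ≤ j → j ≤ n → (d : ℤ) - 2 ≤ fdimZ (f (j - 1) ∩ f j)

/-- The distance between two tiles of `T` (`⊤` if they cannot be joined). -/
def tileDist (T : Tiling d) (P Q : Set (EucSp d)) : ℕ∞ :=
  sInf {n : ℕ∞ | ∃ m : ℕ, n = (m : ℕ∞) ∧ TileChain T P Q m}

/-- The `k`-th corona of `P`: the set of all faces of tiles at distance at most `k` from `P`. -/
def corona (T : Tiling d) (k : ℕ) (P : Set (EucSp d)) : Set (Set (EucSp d)) :=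
  {F | ∃ Q ∈ T.tiles, tileDist T P Q ≤ (k : ℕ∞) ∧ IsFaceOf F Q}

/-- The set of all faces of tiles of `T` (the face-lattice of `T`), ordered by inclusion. -/
def facesOf (T : Tiling d) : Set (Set (EucSp d)) :=
  {F | ∃ Q ∈ T.tiles, IsFaceOf F Q}

/-- An order isomorphism between the `k`-th coronas of `P` and `P'` is an isomorphism of
centered coronas when it maps the center `P` to the center `P'`. -/
def IsCenteredIso (T : Tiling d) (k : ℕ) (P P' : Set (EucSp d))
    (e : ↥(corona T k P) ≃o ↥(corona T k P')) : Prop :=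
  ∀ (hP : P ∈ corona T k P) (hP' : P' ∈ corona T k P'), e ⟨P, hP⟩ = ⟨P', hP'⟩

/-- The centered `k`-th coronas `(P, C_k(P))` and `(P', C_k(P'))` are isomorphic. -/
def CoronasIsomorphic (T : Tiling d) (k : ℕ) (P P' : Set (EucSp d)) : Prop :=
  ∃ e : ↥(corona T k P) ≃o ↥(corona T k P'), IsCenteredIso T k P P' e

/-- `N_k(T)`: the number of isomorphism classes of centered `k`-th coronas of tiles of `T`. -/
def Ncount (T : Tiling d) (k : ℕ) : Cardinal :=
  Cardinal.mk (Quot (fun P Q : ↥T.tiles =>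
    CoronasIsomorphic T k (P : Set (EucSp d)) (Q : Set (EucSp d))))

/-- Two tiles are equivalent under the combinatorial automorphism group `Γ(T)`. -/
def TilesEquiv (T : Tiling d) (P Q : Set (EucSp d)) : Prop :=
  ∃ (φ : ↥(facesOf T) ≃o ↥(facesOf T)) (hP : P ∈ facesOf T) (hQ : Q ∈ facesOf T),
    φ ⟨P, hP⟩ = ⟨Q, hQ⟩

/-- The number of orbits of `Γ(T)` on the tiles of `T`. -/
def orbitCount (T : Tiling d) : Cardinal :=
  Cardinal.mk (Quot (fun P Q : ↥T.tiles =>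
    TilesEquiv T (P : Set (EucSp d)) (Q : Set (EucSp d))))

/-- `Γ(C_{k-1}(P)) = Γ(C_k(P))`: every automorphism of the centered `(k-1)`-st corona of `P`
extends to an automorphism of the centered `k`-th corona of `P`. -/
def AutosExtend (T : Tiling d) (k : ℕ) (P : Set (EucSp d)) : Prop :=
  ∀ e : ↥(corona T (k - 1) P) ≃o ↥(corona T (k - 1) P), IsCenteredIso T (k - 1) P P e →
    ∃ f : ↥(corona T k P) ≃o ↥(corona T k P), IsCenteredIso T k P P f ∧
      ∀ F (hF : F ∈ corona T (k - 1) P) (hF' : F ∈ corona T k P),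
        ((f ⟨F, hF'⟩ : Set (EucSp d))) = ((e ⟨F, hF⟩ : Set (EucSp d)))

/-- The `k`-th tile corona of `P`: the set of tiles at distance at most `k` from `P`. -/
def tileCorona (T : Tiling d) (k : ℕ) (P : Set (EucSp d)) : Set (Set (EucSp d)) :=
  {Q | Q ∈ T.tiles ∧ tileDist T P Q ≤ (k : ℕ∞)}

/-- The centered `k`-th tile coronas `(P, C_k(P))` and `(P', C_k(P'))` are pairwise congruent. -/
def CongruentCoronas (T : Tiling d) (k : ℕ) (P P' : Set (EucSp d)) : Prop :=
  ∃ α : EucSp d ≃ᵢ EucSp d, α '' P = P' ∧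
    (fun Q => α '' Q) '' tileCorona T k P = tileCorona T k P'

/-- `M_k(T)`: the number of pairwise congruence classes of centered `k`-th tile coronas. -/
def Mcount (T : Tiling d) (k : ℕ) : Cardinal :=
  Cardinal.mk (Quot (fun P Q : ↥T.tiles =>
    CongruentCoronas T k (P : Set (EucSp d)) (Q : Set (EucSp d))))

/-- `α` is a symmetry of the tiling `T`: an isometry of `ℝ^d` mapping `T` onto itself. -/
def IsSymmetryOf (T : Tiling d) (α : EucSp d ≃ᵢ EucSp d) : Prop :=
  (fun Q => α '' Q) '' T.tiles = T.tiles

/-- Two tiles are equivalent under the symmetry group `G(T)` of `T`. -/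
def GeomEquiv (T : Tiling d) (P Q : Set (EucSp d)) : Prop :=
  ∃ α : EucSp d ≃ᵢ EucSp d, IsSymmetryOf T α ∧ α '' P = Q

/-- The number of orbits of `G(T)` on the tiles of `T`. -/
def geomOrbitCount (T : Tiling d) : Cardinal :=
  Cardinal.mk (Quot (fun P Q : ↥T.tiles =>
    GeomEquiv T (P : Set (EucSp d)) (Q : Set (EucSp d))))

/-- `G_{k-1}(P) = G_k(P)`: every symmetry of the centered `(k-1)`-st tile corona of `P`
is a symmetry of the centered `k`-th tile corona of `P`. -/
def SymsExtend (T : Tiling d) (k : ℕ) (P : Set (EucSp d)) : Prop :=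
  ∀ α : EucSp d ≃ᵢ EucSp d, α '' P = P →
    (fun Q => α '' Q) '' tileCorona T (k - 1) P = tileCorona T (k - 1) P →
    (fun Q => α '' Q) '' tileCorona T k P = tileCorona T k P

/-!
Suppose `M_{k-1}(T) = M_k(T)` is finite and `G_{k-1}(P) = G_k(P)` for every tile. Then two tiles
with congruent `(k-1)`-coronas already have congruent `k`-coronas, since the surjection between
the finite sets of classes is a bijection. Let `α` map the centred `k`-corona of `P` onto that of
`Q`. Around a neighbour `S` of `P`, `α` is still a congruence of `(k-1)`-coronas, so some `β`
maps the `k`-corona of `S` onto that of `α S`; now `β⁻¹ α` is a symmetry of the `(k-1)`-corona of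
`S`, hence of its `k`-corona, and `α` is a congruence of `k`-coronas around `S`. Any two tiles are
joined by a chain of tiles meeting in faces of dimension at least `d - 2`, so `α` is a symmetry
of `T`: the `G(T)`-orbits are the congruence classes of centred `k`-coronas.

Conversely, if `G(T)` has finitely many orbits, `M_k(T)` is monotone and bounded by their number,
and `G_k(P)` decreases inside the finite group `G(P)`, so both stabilise.
-/

open Set Filter Relation

namespace IsometryEquiv

variable {X Y Z : Type*} [PseudoEMetricSpace X] [PseudoEMetricSpace Y] [PseudoEMetricSpace Z]

@[simp] lemma coe_refl : ⇑(IsometryEquiv.refl X) = id := rfl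

@[simp] lemma symm_image_image (α : X ≃ᵢ Y) (s : Set X) : α.symm '' (α '' s) = s :=
  α.toEquiv.symm_image_image s

@[simp] lemma image_symm_image (α : X ≃ᵢ Y) (s : Set Y) : α '' (α.symm '' s) = s :=
  α.toEquiv.image_symm_image s

lemma image_trans (α : X ≃ᵢ Y) (β : Y ≃ᵢ Z) (s : Set X) : (α.trans β) '' s = β '' (α '' s) :=
  image_comp β α s

lemma image_image_eq_of_subset {α : X ≃ᵢ Y} {A : Set (Set X)} {B : Set (Set Y)}
    (h : (fun Q => α '' Q) '' A ⊆ B) (h' : (fun Q => α.symm '' Q) '' B ⊆ A) :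
    (fun Q => α '' Q) '' A = B :=
  h.antisymm fun Q hQ => ⟨α.symm '' Q, h' (mem_image_of_mem _ hQ), α.image_symm_image Q⟩

end IsometryEquiv

lemma AffineEquiv.image_extremePoints {𝕜 E F : Type*} [Ring 𝕜] [PartialOrder 𝕜]
    [IsOrderedRing 𝕜] [AddCommGroup E] [Module 𝕜 E] [AddCommGroup F] [Module 𝕜 F]
    (f : E ≃ᵃ[𝕜] F) (s : Set E) : f '' extremePoints 𝕜 s = extremePoints 𝕜 (f '' s) := by
  ext b
  obtain ⟨a, rfl⟩ := f.surjective b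
  have : ∀ x y, f '' openSegment 𝕜 x y = openSegment 𝕜 (f x) (f y) :=
    image_openSegment _ f.toAffineMap
  simp only [mem_extremePoints, f.surjective.forall, f.injective.mem_set_image,
    f.injective.eq_iff, ← this]

section NormedSpace

variable {E : Type*} [NormedAddCommGroup E] [NormedSpace ℝ E]

lemma IsometryEquiv.finrank_vectorSpan_image (α : E ≃ᵢ E) (s : Set E) :
    Module.finrank ℝ (vectorSpan ℝ (α '' s)) = Module.finrank ℝ (vectorSpan ℝ s) := by
  let f := α.toRealAffineIsometryEquiv.toAffineEquiv
  rw [show α '' s = f.toAffineMap '' s from rfl, ← AffineMap.map_vectorSpan]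
  exact f.linear.finrank_map_eq _

/-- An isometry of `E` is determined by what it does to the vertices of a polytope spanning `E`,
and it permutes them if it preserves the polytope. -/
lemma finite_setOf_isometryEquiv_image_eq {P : Set E} (hfin : (extremePoints ℝ P).Finite)
    (hspan : affineSpan ℝ (extremePoints ℝ P) = ⊤) : {α : E ≃ᵢ E | α '' P = P}.Finite := by
  have : Finite (extremePoints ℝ P) := hfin.to_subtype
  have hmaps (α : E ≃ᵢ E) (hα : α '' P = P) : MapsTo α (extremePoints ℝ P) (extremePoints ℝ P) :=
    fun x hx => by
      have h : α '' extremePoints ℝ P = extremePoints ℝ (α '' P) :=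
        AffineEquiv.image_extremePoints α.toRealAffineIsometryEquiv.toAffineEquiv P
      rw [← hα, ← h]
      exact mem_image_of_mem α hx
  refine finite_coe_iff.1
    (Finite.of_injective (fun α => (hmaps α.1 α.2).restrict) fun α β h => ?_)
  have := AffineEquiv.ext_on hspan α.1.toRealAffineIsometryEquiv.toAffineEquiv
    β.1.toRealAffineIsometryEquiv.toAffineEquiv fun x hx =>
      congrArg Subtype.val (congrFun h ⟨x, hx⟩)
  exact Subtype.ext (IsometryEquiv.ext fun x => congrArg (· x) this)

/-- Baire category: a proper affine subspace of a finite-dimensional space is nowhere dense. -/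
lemma exists_mem_forall_notMem_affineSpan [FiniteDimensional ℝ E] {S : Set (Set E)}
    (hS : S.Countable) (hdim : ∀ s ∈ S, Module.finrank ℝ (vectorSpan ℝ s) < Module.finrank ℝ E)
    {U : Set E} (hU : IsOpen U) (hne : U.Nonempty) : ∃ x ∈ U, ∀ s ∈ S, x ∉ affineSpan ℝ s := by
  have hdense : Dense (⋂ s ∈ S, (affineSpan ℝ s : Set E)ᶜ) := by
    refine dense_biInter_of_isOpen
      (fun s _ => (AffineSubspace.closed_of_finiteDimensional _).isOpen_compl) hS fun s hs => ?_
    rw [← interior_eq_empty_iff_dense_compl, ← not_nonempty_iff_eq_empty,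
      (affineSpan ℝ s).convex.interior_nonempty_iff_affineSpan_eq_top,
      AffineSubspace.affineSpan_coe]
    intro htop
    have := hdim s hs
    rw [← direction_affineSpan, htop, AffineSubspace.direction_top, finrank_top] at this
    exact this.false
  obtain ⟨x, hx, hxU⟩ := hdense.exists_mem_open hU hne
  exact ⟨x, hxU, fun s hs => mem_iInter₂.1 hx s hs⟩

end NormedSpace

lemma mem_affineSpan_insert_of_mem_segment {E : Type*} [AddCommGroup E] [Module ℝ E]
    {x y z : E} {F : Set E} (hz : z ∈ segment ℝ x y) (hzF : z ∈ F) (hzx : z ≠ x) :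
    y ∈ affineSpan ℝ (insert x F) := by
  have hcol := (mem_segment_iff_wbtw.1 hz).collinear
  refine affineSpan_mono ℝ (insert_subset_insert (singleton_subset_iff.2 hzF)) ?_
  exact hcol.mem_affineSpan_of_mem_of_ne (by simp) (by simp) (by simp) hzx.symm

lemma IsPreconnected.reflTransGen_of_isClosed_cover {X ι : Type*} [TopologicalSpace X]
    {s : Set X} (hs : IsPreconnected s) {I : Set ι} (hI : I.Finite) {K : ι → Set X}
    (hK : ∀ i ∈ I, IsClosed (K i)) (hcov : s ⊆ ⋃ i ∈ I, K i) {a b : ι} (ha : a ∈ I)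
    (hb : b ∈ I) (has : (s ∩ K a).Nonempty) (hbs : (s ∩ K b).Nonempty) :
    ReflTransGen (fun i j => i ∈ I ∧ j ∈ I ∧ (s ∩ (K i ∩ K j)).Nonempty) a b := by
  set r := fun i j => i ∈ I ∧ j ∈ I ∧ (s ∩ (K i ∩ K j)).Nonempty
  set R := {i | i ∈ I ∧ ReflTransGen r a i}
  -- otherwise the members reachable from `a` and the others would separate `s`
  by_contra hab
  have hclosed (J : Set ι) (hJ : J ⊆ I) : IsClosed (⋃ i ∈ J, K i) :=
    (hI.subset hJ).isClosed_biUnion fun i hi => hK i (hJ hi)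
  have hsplit : s ⊆ (⋃ i ∈ R, K i) ∪ ⋃ i ∈ I \ R, K i := by
    intro x hx
    obtain ⟨i, hi, hxi⟩ := mem_iUnion₂.1 (hcov hx)
    by_cases hiR : i ∈ R
    · exact Or.inl (mem_iUnion₂.2 ⟨i, hiR, hxi⟩)
    · exact Or.inr (mem_iUnion₂.2 ⟨i, ⟨hi, hiR⟩, hxi⟩)
  obtain ⟨x, hxs, hxR, hxR'⟩ := isPreconnected_closed_iff.1 hs _ _
    (hclosed R fun i hi => hi.1) (hclosed (I \ R) sdiff_subset) hsplit
    (has.mono (inter_subset_inter_right _ (subset_biUnion_of_mem (u := K) ⟨ha, .refl⟩)))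
    (hbs.mono (inter_subset_inter_right _ (subset_biUnion_of_mem (u := K) ⟨hb, fun h => hab h.2⟩)))
  obtain ⟨i, hiR, hxi⟩ := mem_iUnion₂.1 hxR
  obtain ⟨j, ⟨hjI, hjR⟩, hxj⟩ := mem_iUnion₂.1 hxR'
  exact hjR ⟨hjI, hiR.2.tail ⟨hiR.1, hjI, x, hxs, hxi, hxj⟩⟩

section Quot

variable {X : Type*} {r s : X → X → Prop}

lemma Quot.map_id_surjective (h : ∀ a b, r a b → s a b) :
    Function.Surjective (Quot.map id h : Quot r → Quot s) :=
  Quot.ind fun a => ⟨Quot.mk r a, rfl⟩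

lemma Cardinal.mk_quot_le_of_le (h : ∀ a b, r a b → s a b) :
    Cardinal.mk (Quot s) ≤ Cardinal.mk (Quot r) :=
  Cardinal.mk_le_of_surjective (Quot.map_id_surjective h)

lemma rel_of_mk_quot_eq (hr : Equivalence r) (h : ∀ a b, r a b → s a b)
    (hfin : Cardinal.mk (Quot r) < Cardinal.aleph0)
    (heq : Cardinal.mk (Quot r) = Cardinal.mk (Quot s)) {a b : X} (hab : s a b) : r a b := by
  have : Finite (Quot r) := Cardinal.lt_aleph0_iff_finite.1 hfin
  obtain ⟨e⟩ := Cardinal.eq.1 heq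
  have hinj := (Finite.injective_iff_surjective_of_equiv e).2 (Quot.map_id_surjective h)
  exact hr.eqvGen_iff.1 (Quot.eq.1 (hinj (Quot.sound hab)))

end Quot

lemma Cardinal.eventually_eq_succ_of_monotone {f : ℕ → Cardinal} (hf : Monotone f)
    {c : Cardinal} (hc : c < Cardinal.aleph0) (hbdd : ∀ i, f i ≤ c) :
    ∀ᶠ i in atTop, f i = f (i + 1) := by
  have hlt (i : ℕ) : f i < Cardinal.aleph0 := (hbdd i).trans_lt hc
  have hlim := tendsto_atTop_ciSup (fun i j hij => Cardinal.toNat_le_toNat (hf hij) (hlt j))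
    ⟨c.toNat, by rintro _ ⟨i, rfl⟩; exact Cardinal.toNat_le_toNat (hbdd i) hc⟩
  rw [nhds_discrete, tendsto_pure] at hlim
  filter_upwards [hlim, (tendsto_add_atTop_nat 1).eventually hlim] with i hi hi'
  rw [← Cardinal.cast_toNat_of_lt_aleph0 (hlt i), ← Cardinal.cast_toNat_of_lt_aleph0 (hlt (i + 1)),
    hi, hi']

lemma Set.eventually_eq_succ_of_antitone {X : Type*} {S : ℕ → Set X} (hS : Antitone S)
    (h0 : (S 0).Finite) : ∀ᶠ i in atTop, S i = S (i + 1) := by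
  have hfin (i : ℕ) : (S i).Finite := h0.subset (hS (Nat.zero_le i))
  obtain ⟨n, hn⟩ := WellFoundedLT.antitone_chain_condition
    fun i j hij => ncard_le_ncard (hS hij) (hfin i)
  filter_upwards [eventually_ge_atTop n] with i hi
  exact (eq_of_subset_of_ncard_le (hS (Nat.le_succ i))
    ((hn i hi).symm.trans (hn (i + 1) (by omega))).le (hfin i)).symm

lemma fdimZ_image (α : EucSp d ≃ᵢ EucSp d) (F : Set (EucSp d)) : fdimZ (α '' F) = fdimZ F := by
  unfold fdimZ
  rw [direction_affineSpan, direction_affineSpan, α.finrank_vectorSpan_image]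
  simp only [image_eq_empty]

namespace Tiling

variable {T : Tiling d} {P Q R : Set (EucSp d)}

def Adjacent (T : Tiling d) (P Q : Set (EucSp d)) : Prop :=
  P ∈ T.tiles ∧ Q ∈ T.tiles ∧ (d : ℤ) - 2 ≤ fdimZ (P ∩ Q)

lemma isCompact_of_mem (hP : P ∈ T.tiles) : IsCompact P := by
  obtain ⟨⟨s, rfl⟩, -⟩ := T.polytope P hP
  exact s.finite_toSet.isCompact_convexHull ℝ

lemma affineSpan_eq_top_of_mem (hP : P ∈ T.tiles) : affineSpan ℝ P = ⊤ :=
  top_unique <| isOpen_interior.affineSpan_eq_top (T.polytope P hP).2 ▸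
    affineSpan_mono ℝ interior_subset

lemma fdimZ_of_mem (hP : P ∈ T.tiles) : fdimZ P = d := by
  obtain ⟨x, hx⟩ := (T.polytope P hP).2
  rw [fdimZ, if_neg (nonempty_iff_ne_empty.1 ⟨x, interior_subset hx⟩),
    affineSpan_eq_top_of_mem hP, AffineSubspace.direction_top, finrank_top, finrank_euclideanSpace,
    Fintype.card_fin]

lemma adjacent_refl (hP : P ∈ T.tiles) : T.Adjacent P P :=
  ⟨hP, hP, by rw [inter_self, fdimZ_of_mem hP]; omega⟩

lemma Adjacent.image (h : T.Adjacent P Q) {α : EucSp d ≃ᵢ EucSp d} (hP : α '' P ∈ T.tiles)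
    (hQ : α '' Q ∈ T.tiles) : T.Adjacent (α '' P) (α '' Q) :=
  ⟨hP, hQ, by rw [← image_inter α.injective, fdimZ_image]; exact h.2.2⟩

lemma finite_setOf_inter_nonempty {K : Set (EucSp d)} (hK : IsCompact K) :
    {R | R ∈ T.tiles ∧ (R ∩ K).Nonempty}.Finite := by
  choose U hU hUfin using T.locallyFinite
  obtain ⟨t, ht⟩ := hK.elim_nhds_subcover U fun x _ => hU x
  refine (t.finite_toSet.biUnion fun x _ => hUfin x).subset ?_
  rintro R ⟨hR, y, hyR, hyK⟩
  obtain ⟨x, hxt, hyU⟩ := mem_iUnion₂.1 (ht.2 hyK)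
  exact mem_iUnion₂.2 ⟨x, hxt, hR, y, hyR, hyU⟩

lemma finite_setOf_isometryEquiv_image_eq (hP : P ∈ T.tiles) :
    {α : EucSp d ≃ᵢ EucSp d | α '' P = P}.Finite := by
  obtain ⟨⟨s, hs⟩, -⟩ := T.polytope P hP
  have hfin : (extremePoints ℝ P).Finite :=
    s.finite_toSet.subset (hs ▸ extremePoints_convexHull_subset)
  have hhull : convexHull ℝ (extremePoints ℝ P) = P := by
    rw [← (hfin.isCompact_convexHull ℝ).isClosed.closure_eq,
      closure_convexHull_extremePoints (isCompact_of_mem hP) (hs ▸ convex_convexHull ℝ _)]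
  refine _root_.finite_setOf_isometryEquiv_image_eq hfin ?_
  rw [← affineSpan_convexHull, hhull, affineSpan_eq_top_of_mem hP]

end Tiling

section TileDistance

variable {T : Tiling d} {P Q R : Set (EucSp d)} {m n : ℕ}

lemma tileChain_zero_iff : TileChain T P Q 0 ↔ P = Q ∧ P ∈ T.tiles := by
  constructor
  · rintro ⟨f, rfl, rfl, ht, -⟩
    exact ⟨rfl, ht 0 le_rfl⟩
  · rintro ⟨rfl, hP⟩
    exact ⟨fun _ => P, rfl, rfl, fun _ _ => hP, fun j h1 h2 => by omega⟩

lemma tileChain_succ_iff : TileChain T P Q (m + 1) ↔ ∃ R, TileChain T P R m ∧ T.Adjacent R Q := by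
  constructor
  · rintro ⟨f, h0, hm, ht, hc⟩
    refine ⟨f m, ⟨f, h0, rfl, fun j hj => ht j (by omega), fun j h1 h2 => hc j h1 (by omega)⟩,
      ht m (by omega), hm ▸ ht (m + 1) le_rfl, ?_⟩
    simpa [hm] using hc (m + 1) (by omega) le_rfl
  · rintro ⟨R, ⟨f, h0, rfl, ht, hc⟩, -, hQ, hRQ⟩
    refine ⟨Function.update f (m + 1) Q, by simp [h0], by simp, fun j hj => ?_, fun j h1 h2 => ?_⟩
    · rcases (Nat.le_succ_iff.1 hj) with hj | rfl
      · simpa [Function.update_apply, show j ≠ m + 1 by omega] using ht j hj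
      · simpa using hQ
    · rcases (Nat.le_succ_iff.1 h2) with hj | rfl
      · simpa [Function.update_apply, show j ≠ m + 1 by omega, show j - 1 ≠ m + 1 by omega]
          using hc j h1 hj
      · simpa using hRQ

lemma TileChain.mono (h : TileChain T P Q m) (hmn : m ≤ n) : TileChain T P Q n := by
  induction n, hmn using Nat.le_induction with
  | base => exact h
  | succ n _ ih =>
    have hQ : Q ∈ T.tiles := by obtain ⟨f, -, rfl, ht, -⟩ := ih; exact ht n le_rfl
    exact tileChain_succ_iff.2 ⟨Q, ih, Tiling.adjacent_refl hQ⟩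

lemma tileDist_le_iff : tileDist T P Q ≤ m ↔ TileChain T P Q m := by
  refine ⟨fun h => ?_, fun h => sInf_le ⟨m, rfl, h⟩⟩
  have hne : {n : ℕ∞ | ∃ m : ℕ, n = m ∧ TileChain T P Q m}.Nonempty := by
    refine nonempty_iff_ne_empty.2 fun he => ?_
    rw [tileDist, he, sInf_empty, top_le_iff] at h
    exact ENat.natCast_ne_top m h
  obtain ⟨m', hm', hchain⟩ := csInf_mem hne
  exact hchain.mono (by rw [← tileDist] at hm'; exact_mod_cast hm' ▸ h)

lemma tileDist_le_zero_iff : tileDist T P Q ≤ (0 : ℕ) ↔ P = Q ∧ P ∈ T.tiles :=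
  tileDist_le_iff.trans tileChain_zero_iff

lemma tileDist_le_succ_iff :
    tileDist T P Q ≤ (m + 1 : ℕ) ↔ ∃ R, tileDist T P R ≤ m ∧ T.Adjacent R Q := by
  simp only [tileDist_le_iff, tileChain_succ_iff]

lemma tileDist_self (hP : P ∈ T.tiles) : tileDist T P P ≤ (0 : ℕ) :=
  tileDist_le_zero_iff.2 ⟨rfl, hP⟩

lemma mem_tiles_left_of_tileDist_le (h : tileDist T P Q ≤ m) : P ∈ T.tiles := by
  obtain ⟨f, rfl, -, ht, -⟩ := tileDist_le_iff.1 h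
  exact ht 0 (Nat.zero_le m)

lemma tileDist_le_of_le (h : tileDist T P Q ≤ m) (hmn : m ≤ n) : tileDist T P Q ≤ n :=
  h.trans (by exact_mod_cast hmn)

lemma tileDist_triangle (h : tileDist T P Q ≤ m) (h' : tileDist T Q R ≤ n) :
    tileDist T P R ≤ (m + n : ℕ) := by
  induction n generalizing R with
  | zero => obtain ⟨rfl, -⟩ := tileDist_le_zero_iff.1 h'; exact h
  | succ n ih =>
    obtain ⟨R', hQR', hR'R⟩ := tileDist_le_succ_iff.1 h'
    exact tileDist_le_succ_iff.2 ⟨R', ih hQR', hR'R⟩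

lemma tileDist_image_le (α : EucSp d ≃ᵢ EucSp d) (h : tileDist T P Q ≤ m)
    (hα : ∀ R ∈ T.tiles, tileDist T P R ≤ m → α '' R ∈ T.tiles) :
    tileDist T (α '' P) (α '' Q) ≤ m := by
  induction m generalizing Q with
  | zero =>
    obtain ⟨rfl, hP⟩ := tileDist_le_zero_iff.1 h
    exact tileDist_self (hα P hP h)
  | succ m ih =>
    obtain ⟨R, hPR, hRQ⟩ := tileDist_le_succ_iff.1 h
    have hαR : ∀ S ∈ T.tiles, tileDist T P S ≤ m → α '' S ∈ T.tiles :=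
      fun S hS hPS => hα S hS (tileDist_le_of_le hPS m.le_succ)
    exact tileDist_le_succ_iff.2 ⟨α '' R, ih hPR hαR,
      hRQ.image (hα R hRQ.1 (tileDist_le_of_le hPR m.le_succ)) (hα Q hRQ.2.1 h)⟩

lemma self_mem_tileCorona (hP : P ∈ T.tiles) (k : ℕ) : P ∈ tileCorona T k P :=
  ⟨hP, tileDist_le_of_le (tileDist_self hP) (Nat.zero_le k)⟩

end TileDistance

section CoronaCongruence

variable {T : Tiling d} {k j a : ℕ} {α β σ : EucSp d ≃ᵢ EucSp d} {P Q S : Set (EucSp d)}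

def IsCoronaCongruence (T : Tiling d) (k : ℕ) (α : EucSp d ≃ᵢ EucSp d) (P : Set (EucSp d)) :
    Prop :=
  (fun Q => α '' Q) '' tileCorona T k P = tileCorona T k (α '' P)

lemma congruentCoronas_iff :
    CongruentCoronas T k P Q ↔ ∃ α : EucSp d ≃ᵢ EucSp d, α '' P = Q ∧ IsCoronaCongruence T k α P :=
  exists_congr fun α => and_congr_right fun hα => by rw [IsCoronaCongruence, hα]

lemma symsExtend_iff : SymsExtend T k P ↔ ∀ α : EucSp d ≃ᵢ EucSp d, α '' P = P →
    IsCoronaCongruence T (k - 1) α P → IsCoronaCongruence T k α P :=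
  forall_congr' fun α => imp_congr_right fun hα => by simp only [IsCoronaCongruence, hα]

lemma isCoronaCongruence_refl : IsCoronaCongruence T k (IsometryEquiv.refl _) P := by
  simp [IsCoronaCongruence]

lemma IsCoronaCongruence.symm (h : IsCoronaCongruence T k α P) :
    IsCoronaCongruence T k α.symm (α '' P) := by
  rw [IsCoronaCongruence, ← h, image_image, α.symm_image_image]
  simp

lemma IsCoronaCongruence.trans (h : IsCoronaCongruence T k α P)
    (h' : IsCoronaCongruence T k β (α '' P)) : IsCoronaCongruence T k (α.trans β) P := by
  simp only [IsCoronaCongruence, IsometryEquiv.image_trans] at h h' ⊢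
  rw [← h', ← h, image_image]

lemma IsCoronaCongruence.image_mem_tiles (h : IsCoronaCongruence T k α P)
    (hQ : Q ∈ tileCorona T k P) : α '' Q ∈ T.tiles :=
  (h ▸ mem_image_of_mem (fun Q => α '' Q) hQ : α '' Q ∈ tileCorona T k (α '' P)).1

lemma IsCoronaCongruence.tileDist_image_le (h : IsCoronaCongruence T k α P)
    (hPS : tileDist T P S ≤ a) (hSQ : tileDist T S Q ≤ j) (hajk : a + j ≤ k) :
    tileDist T (α '' S) (α '' Q) ≤ j :=
  _root_.tileDist_image_le α hSQ fun _ hR hSR =>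
    h.image_mem_tiles ⟨hR, tileDist_le_of_le (tileDist_triangle hPS hSR) hajk⟩

lemma IsCoronaCongruence.image_tileCorona_subset (h : IsCoronaCongruence T k α P)
    (hPS : tileDist T P S ≤ a) (hajk : a + j ≤ k) :
    (fun Q => α '' Q) '' tileCorona T j S ⊆ tileCorona T j (α '' S) := by
  rintro _ ⟨Q, ⟨hQ, hSQ⟩, rfl⟩
  exact ⟨h.image_mem_tiles ⟨hQ, tileDist_le_of_le (tileDist_triangle hPS hSQ) hajk⟩,
    h.tileDist_image_le hPS hSQ hajk⟩

lemma IsCoronaCongruence.of_tileDist_le (h : IsCoronaCongruence T k α P)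
    (hPS : tileDist T P S ≤ a) (hajk : a + j ≤ k) : IsCoronaCongruence T j α S := by
  have hP : P ∈ T.tiles := mem_tiles_left_of_tileDist_le hPS
  have hPS' : tileDist T (α '' P) (α '' S) ≤ a :=
    h.tileDist_image_le (tileDist_self hP) hPS (by omega)
  refine IsometryEquiv.image_image_eq_of_subset (h.image_tileCorona_subset hPS hajk) ?_
  simpa using h.symm.image_tileCorona_subset hPS' hajk

lemma IsCoronaCongruence.mono (h : IsCoronaCongruence T k α P) (hP : P ∈ T.tiles) (hjk : j ≤ k) :
    IsCoronaCongruence T j α P :=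
  h.of_tileDist_le (tileDist_self hP) (by omega)

lemma IsSymmetryOf.image_mem_tiles (hσ : IsSymmetryOf T σ) (hP : P ∈ T.tiles) :
    σ '' P ∈ T.tiles :=
  hσ ▸ mem_image_of_mem (fun Q => σ '' Q) hP

lemma IsSymmetryOf.symm (hσ : IsSymmetryOf T σ) : IsSymmetryOf T σ.symm := by
  unfold IsSymmetryOf at hσ ⊢
  conv_lhs => rw [← hσ]
  simp [image_image]

lemma IsSymmetryOf.trans (hσ : IsSymmetryOf T σ) (hα : IsSymmetryOf T α) :
    IsSymmetryOf T (σ.trans α) := by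
  simp only [IsSymmetryOf, IsometryEquiv.image_trans] at hσ hα ⊢
  rw [← image_image (fun Q => α '' Q), hσ, hα]

lemma isSymmetryOf_of_forall (h : ∀ R ∈ T.tiles, α '' R ∈ T.tiles)
    (h' : ∀ R ∈ T.tiles, α.symm '' R ∈ T.tiles) : IsSymmetryOf T α :=
  IsometryEquiv.image_image_eq_of_subset (by rintro _ ⟨R, hR, rfl⟩; exact h R hR)
    (by rintro _ ⟨R, hR, rfl⟩; exact h' R hR)

lemma IsSymmetryOf.image_tileCorona_subset (hσ : IsSymmetryOf T σ) (k : ℕ) (P : Set (EucSp d)) :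
    (fun Q => σ '' Q) '' tileCorona T k P ⊆ tileCorona T k (σ '' P) := by
  rintro _ ⟨Q, ⟨hQ, hPQ⟩, rfl⟩
  exact ⟨hσ.image_mem_tiles hQ, tileDist_image_le σ hPQ fun _ hR _ => hσ.image_mem_tiles hR⟩

lemma IsSymmetryOf.isCoronaCongruence (hσ : IsSymmetryOf T σ) (k : ℕ) (P : Set (EucSp d)) :
    IsCoronaCongruence T k σ P :=
  IsometryEquiv.image_image_eq_of_subset (hσ.image_tileCorona_subset k P)
    (by simpa using hσ.symm.image_tileCorona_subset k (σ '' P))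

lemma GeomEquiv.congruentCoronas (h : GeomEquiv T P Q) (k : ℕ) : CongruentCoronas T k P Q := by
  obtain ⟨σ, hσ, hσP⟩ := h
  exact congruentCoronas_iff.2 ⟨σ, hσP, hσ.isCoronaCongruence k P⟩

lemma CongruentCoronas.mono (h : CongruentCoronas T k P Q) (hP : P ∈ T.tiles) (hjk : j ≤ k) :
    CongruentCoronas T j P Q := by
  obtain ⟨α, hαP, hα⟩ := congruentCoronas_iff.1 h
  exact congruentCoronas_iff.2 ⟨α, hαP, hα.mono hP hjk⟩

variable (T) in
lemma congruentCoronas_equivalence (k : ℕ) :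
    Equivalence fun P Q : T.tiles => CongruentCoronas T k (P : Set (EucSp d)) Q where
  refl _ := congruentCoronas_iff.2 ⟨_, by simp, isCoronaCongruence_refl⟩
  symm {P Q} h := by
    obtain ⟨α, hαP, hα⟩ := congruentCoronas_iff.1 h
    exact congruentCoronas_iff.2 ⟨α.symm, by simp [← hαP], hαP ▸ hα.symm⟩
  trans {P Q R} h h' := by
    obtain ⟨α, hαP, hα⟩ := congruentCoronas_iff.1 h
    obtain ⟨β, hβQ, hβ⟩ := congruentCoronas_iff.1 h'
    exact congruentCoronas_iff.2
      ⟨α.trans β, by rw [IsometryEquiv.image_trans, hαP, hβQ], hα.trans (hαP ▸ hβ)⟩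

variable (T) in
lemma geomEquiv_equivalence :
    Equivalence fun P Q : T.tiles => GeomEquiv T (P : Set (EucSp d)) Q where
  refl _ := ⟨IsometryEquiv.refl _, by simp [IsSymmetryOf], by simp⟩
  symm := fun ⟨σ, hσ, hσP⟩ => ⟨σ.symm, hσ.symm, by simp [← hσP]⟩
  trans := fun ⟨σ, hσ, hσP⟩ ⟨α, hα, hαQ⟩ =>
    ⟨σ.trans α, hσ.trans hα, by rw [IsometryEquiv.image_trans, hσP, hαQ]⟩

end CoronaCongruence

section Connectivity

variable {T : Tiling d} {P Q : Set (EucSp d)}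

lemma finrank_vectorSpan_add_two_le_of_fdimZ_lt {F : Set (EucSp d)} (h : fdimZ F < d - 2) :
    Module.finrank ℝ (vectorSpan ℝ F) + 2 ≤ d := by
  unfold fdimZ at h
  split_ifs at h with hF
  · subst hF
    rw [vectorSpan_empty, finrank_bot]
    omega
  · rw [direction_affineSpan] at h
    omega

/-- Choose `x` off the affine spans of all low-dimensional intersections `F` of two tiles, and
then `y` off the affine spans of `insert x F`; by Baire both choices are possible in any open
set, and then no point of `[x, y]` lies in any such `F`. -/
lemma Tiling.exists_segment_forall_le_fdimZ_inter (hP : P ∈ T.tiles) (hQ : Q ∈ T.tiles) :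
    ∃ x ∈ P, ∃ y ∈ Q, ∀ z ∈ segment ℝ x y, ∀ R ∈ T.tiles, ∀ R' ∈ T.tiles, z ∈ R ∩ R' →
      (d : ℤ) - 2 ≤ fdimZ (R ∩ R') := by
  set L := {F | ∃ R ∈ T.tiles, ∃ R' ∈ T.tiles, F = R ∩ R' ∧ fdimZ F < d - 2}
  have hL : L.Countable := (T.countable.image2 T.countable (· ∩ ·)).mono
    (by rintro F ⟨R, hR, R', hR', rfl, -⟩; exact mem_image2_of_mem hR hR')
  have hLdim (F : Set (EucSp d)) (hF : F ∈ L) : Module.finrank ℝ (vectorSpan ℝ F) + 2 ≤ d := by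
    obtain ⟨-, -, -, -, -, hF⟩ := hF
    exact finrank_vectorSpan_add_two_le_of_fdimZ_lt hF
  obtain ⟨x, hxP, hx⟩ := exists_mem_forall_notMem_affineSpan hL
    (fun F hF => by have := hLdim F hF; rw [finrank_euclideanSpace_fin]; omega)
    isOpen_interior (T.polytope P hP).2
  obtain ⟨y, hyQ, hy⟩ := exists_mem_forall_notMem_affineSpan (hL.image (insert x))
    (by
      rintro _ ⟨F, hF, rfl⟩
      have := finrank_vectorSpan_insert_le_set ℝ F x
      have := hLdim F hF
      rw [finrank_euclideanSpace_fin]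
      omega)
    isOpen_interior (T.polytope Q hQ).2
  refine ⟨x, interior_subset hxP, y, interior_subset hyQ, fun z hz R hR R' hR' hzRR' => ?_⟩
  by_contra hlt
  have hF : R ∩ R' ∈ L := ⟨R, hR, R', hR', rfl, not_le.1 hlt⟩
  rcases eq_or_ne z x with rfl | hzx
  · exact hx _ hF (subset_affineSpan ℝ _ hzRR')
  · exact hy _ (mem_image_of_mem _ hF) (mem_affineSpan_insert_of_mem_segment hz hzRR' hzx)

theorem Tiling.reflTransGen_adjacent (hP : P ∈ T.tiles) (hQ : Q ∈ T.tiles) :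
    ReflTransGen T.Adjacent P Q := by
  obtain ⟨x, hxP, y, hyQ, hxy⟩ := T.exists_segment_forall_le_fdimZ_inter hP hQ
  have hcompact : IsCompact (segment ℝ x y) := by
    rw [← convexHull_pair]
    exact (toFinite {x, y}).isCompact_convexHull ℝ
  set I := {R | R ∈ T.tiles ∧ (R ∩ segment ℝ x y).Nonempty}
  have hcov : segment ℝ x y ⊆ ⋃ R ∈ I, R := by
    intro z hz
    obtain ⟨R, hR, hzR⟩ := mem_sUnion.1 (T.covers ▸ mem_univ z)
    exact mem_iUnion₂.2 ⟨R, ⟨hR, z, hzR, hz⟩, hzR⟩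
  have hchain := (convex_segment x y).isPreconnected.reflTransGen_of_isClosed_cover (K := id)
    (Tiling.finite_setOf_inter_nonempty hcompact)
    (fun R hR => (Tiling.isCompact_of_mem hR.1).isClosed) hcov
    ⟨hP, x, hxP, left_mem_segment ℝ x y⟩ ⟨hQ, y, hyQ, right_mem_segment ℝ x y⟩
    ⟨x, left_mem_segment ℝ x y, hxP⟩ ⟨y, right_mem_segment ℝ x y, hyQ⟩
  refine ReflTransGen.mono (fun R R' ⟨hR, hR', z, hz, hzRR'⟩ => ?_) _ _ hchain
  exact ⟨hR.1, hR'.1, hxy z hz R hR.1 R' hR'.1 hzRR'⟩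

end Connectivity

section Counting

variable {T : Tiling d} {k : ℕ} {α σ : EucSp d ≃ᵢ EucSp d} {P R S : Set (EucSp d)}

variable (T) in
lemma Mcount_mono : Monotone (Mcount T) :=
  fun _ _ hjk => Cardinal.mk_quot_le_of_le fun P _ h => h.mono P.2 hjk

variable (T) in
lemma Mcount_le_geomOrbitCount (k : ℕ) : Mcount T k ≤ geomOrbitCount T :=
  Cardinal.mk_quot_le_of_le fun _ _ h => h.congruentCoronas k

lemma CongruentCoronas.of_Mcount_eq {j : ℕ} (hjk : j ≤ k) (hM : Mcount T j = Mcount T k)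
    (hfin : Mcount T k < Cardinal.aleph0) (hR : R ∈ T.tiles) (hS : S ∈ T.tiles)
    (h : CongruentCoronas T j R S) : CongruentCoronas T k R S :=
  rel_of_mk_quot_eq (congruentCoronas_equivalence T k) (fun R _ h => h.mono R.2 hjk) hfin hM.symm
    (a := ⟨R, hR⟩) (b := ⟨S, hS⟩) h

lemma IsCoronaCongruence.of_adjacent (hk : 1 ≤ k)
    (hupg : ∀ R ∈ T.tiles, ∀ S ∈ T.tiles, CongruentCoronas T (k - 1) R S →
      CongruentCoronas T k R S)
    (hsym : ∀ P ∈ T.tiles, SymsExtend T k P) (h : IsCoronaCongruence T k α R)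
    (hRS : T.Adjacent R S) : IsCoronaCongruence T k α S := by
  have hS := hRS.2.1
  have hαS : IsCoronaCongruence T (k - 1) α S :=
    h.of_tileDist_le (tileDist_le_succ_iff.2 ⟨R, tileDist_self hRS.1, hRS⟩) (by omega)
  have hαS_mem : α '' S ∈ T.tiles := hαS.image_mem_tiles (self_mem_tileCorona hS _)
  obtain ⟨β, hβS, hβ⟩ := congruentCoronas_iff.1 <|
    hupg S hS (α '' S) hαS_mem (congruentCoronas_iff.2 ⟨α, rfl, hαS⟩)
  have hβ' : IsCoronaCongruence T (k - 1) β.symm (α '' S) :=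
    hβS ▸ hβ.symm.mono (hβS ▸ hαS_mem) (by omega)
  have hγS : (α.trans β.symm) '' S = S := by
    rw [IsometryEquiv.image_trans, ← hβS, IsometryEquiv.symm_image_image]
  have hγ : IsCoronaCongruence T k (α.trans β.symm) S :=
    symsExtend_iff.1 (hsym S hS) _ hγS (hαS.trans hβ')
  have hα : (α.trans β.symm).trans β = α := by ext x; simp
  exact hα ▸ hγ.trans (by rwa [hγS])

lemma IsCoronaCongruence.of_reflTransGen (hk : 1 ≤ k)
    (hupg : ∀ R ∈ T.tiles, ∀ S ∈ T.tiles, CongruentCoronas T (k - 1) R S →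
      CongruentCoronas T k R S)
    (hsym : ∀ P ∈ T.tiles, SymsExtend T k P) (h : IsCoronaCongruence T k α R)
    (hRS : ReflTransGen T.Adjacent R S) : IsCoronaCongruence T k α S := by
  induction hRS with
  | refl => exact h
  | tail _ hST ih => exact ih.of_adjacent hk hupg hsym hST

lemma IsCoronaCongruence.isSymmetryOf (hk : 1 ≤ k)
    (hupg : ∀ R ∈ T.tiles, ∀ S ∈ T.tiles, CongruentCoronas T (k - 1) R S →
      CongruentCoronas T k R S)
    (hsym : ∀ P ∈ T.tiles, SymsExtend T k P) (hP : P ∈ T.tiles)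
    (h : IsCoronaCongruence T k α P) : IsSymmetryOf T α := by
  have hαP : α '' P ∈ T.tiles := h.image_mem_tiles (self_mem_tileCorona hP k)
  refine isSymmetryOf_of_forall (fun R hR => ?_) (fun R hR => ?_)
  · exact (h.of_reflTransGen hk hupg hsym (T.reflTransGen_adjacent hP hR)).image_mem_tiles
      (self_mem_tileCorona hR k)
  · exact (h.symm.of_reflTransGen hk hupg hsym (T.reflTransGen_adjacent hαP hR)).image_mem_tiles
      (self_mem_tileCorona hR k)

theorem geomOrbitCount_eq_Mcount (hk : 1 ≤ k) (hM : Mcount T (k - 1) = Mcount T k)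
    (hfin : Mcount T k < Cardinal.aleph0) (hsym : ∀ P ∈ T.tiles, SymsExtend T k P) :
    geomOrbitCount T = Mcount T k := by
  have hupg (R) (hR : R ∈ T.tiles) (S) (hS : S ∈ T.tiles) :
      CongruentCoronas T (k - 1) R S → CongruentCoronas T k R S :=
    CongruentCoronas.of_Mcount_eq (Nat.sub_le k 1) hM hfin hR hS
  refine Cardinal.mk_congr (Quot.congrRight fun P Q => ⟨fun h => h.congruentCoronas k, fun h => ?_⟩)
  obtain ⟨α, hαP, hα⟩ := congruentCoronas_iff.1 h
  exact ⟨α, hα.isSymmetryOf hk hupg hsym P.2, hαP⟩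

end Counting

section Stabilizers

variable {T : Tiling d} {k : ℕ} {σ : EucSp d ≃ᵢ EucSp d} {P : Set (EucSp d)}

/-- The group `G_k(P)`. -/
def coronaStabilizer (T : Tiling d) (k : ℕ) (P : Set (EucSp d)) : Set (EucSp d ≃ᵢ EucSp d) :=
  {α | α '' P = P ∧ IsCoronaCongruence T k α P}

lemma coronaStabilizer_antitone (hP : P ∈ T.tiles) : Antitone (coronaStabilizer T · P) :=
  fun _ _ hjk _ hα => ⟨hα.1, hα.2.mono hP hjk⟩

lemma finite_coronaStabilizer (hP : P ∈ T.tiles) (k : ℕ) : (coronaStabilizer T k P).Finite :=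
  (Tiling.finite_setOf_isometryEquiv_image_eq hP).subset fun _ hα => hα.1

lemma symsExtend_of_coronaStabilizer_subset
    (h : coronaStabilizer T (k - 1) P ⊆ coronaStabilizer T k P) : SymsExtend T k P :=
  symsExtend_iff.2 fun _ hαP hα => (h ⟨hαP, hα⟩).2

lemma SymsExtend.image (h : SymsExtend T k P) (hσ : IsSymmetryOf T σ) :
    SymsExtend T k (σ '' P) := by
  refine symsExtend_iff.2 fun α hαP hα => ?_
  set γ := (σ.trans α).trans σ.symm
  have hγP : γ '' P = P := by simp [γ, IsometryEquiv.image_trans, hαP]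
  have hγ : IsCoronaCongruence T k γ P := by
    refine symsExtend_iff.1 h γ hγP (((hσ.isCoronaCongruence _ P).trans hα).trans ?_)
    simpa [IsometryEquiv.image_trans, hαP] using hσ.symm.isCoronaCongruence (k - 1) (σ '' P)
  have hαγ : (σ.symm.trans γ).trans σ = α := by ext x; simp [γ]
  rw [← hαγ]
  refine ((hσ.symm.isCoronaCongruence k _).trans ?_).trans (hσ.isCoronaCongruence k _)
  simpa using hγ

theorem exists_symsExtend_of_geomOrbitCount_lt (hfin : geomOrbitCount T < Cardinal.aleph0) :
    ∃ k, 1 ≤ k ∧ Mcount T (k - 1) = Mcount T k ∧ ∀ P ∈ T.tiles, SymsExtend T k P := by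
  set orbitRel := fun P Q : T.tiles => GeomEquiv T (P : Set (EucSp d)) Q
  have : Finite (Quot orbitRel) := Cardinal.lt_aleph0_iff_finite.1 hfin
  have hM := Cardinal.eventually_eq_succ_of_monotone (Mcount_mono T) hfin
    (Mcount_le_geomOrbitCount T)
  have hG := Filter.eventually_all.2 fun q : Quot orbitRel =>
    Set.eventually_eq_succ_of_antitone (coronaStabilizer_antitone q.out.2)
      (finite_coronaStabilizer q.out.2 0)
  obtain ⟨j, hMj, hGj⟩ := (hM.and hG).exists
  refine ⟨j + 1, by omega, hMj, fun P hP => ?_⟩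
  obtain ⟨σ, hσ, hσP⟩ := (geomEquiv_equivalence T).eqvGen_iff.1 <|
    Quot.eq.1 (Quot.out_eq (Quot.mk _ (⟨P, hP⟩ : T.tiles)))
  rw [← show σ '' _ = P from hσP]
  exact (symsExtend_of_coronaStabilizer_subset (hGj _).subset).image hσ

end Stabilizers

theorem n_isohedral_iff_local_general (d : ℕ) (T : Tiling d) (n : ℕ) :
    geomOrbitCount T = (n : Cardinal) ↔
      ∃ k : ℕ, 1 ≤ k ∧ Mcount T (k - 1) = Mcount T k ∧
        (∀ P ∈ T.tiles, SymsExtend T k P) ∧ Mcount T k = (n : Cardinal) := by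
  constructor
  · intro hG
    have hfin : geomOrbitCount T < Cardinal.aleph0 := hG ▸ Cardinal.natCast_lt_aleph0
    obtain ⟨k, hk, hM, hsym⟩ := exists_symsExtend_of_geomOrbitCount_lt hfin
    have hMfin := (Mcount_le_geomOrbitCount T k).trans_lt hfin
    exact ⟨k, hk, hM, hsym, (geomOrbitCount_eq_Mcount hk hM hMfin hsym).symm.trans hG⟩
  · rintro ⟨k, hk, hM, hsym, hMn⟩
    rw [geomOrbitCount_eq_Mcount hk hM (hMn ▸ Cardinal.natCast_lt_aleph0) hsym, hMn]

/-- `T` is `n`-isohedral if and only if for some positive `k` the two local conditions hold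
with `M_k(T) = n`. -/
theorem n_isohedral_iff_local (d : ℕ) (T : Tiling d)
    (hfin : Mcount T 0 < Cardinal.aleph0) (n : ℕ) (hn : 1 ≤ n) :
    geomOrbitCount T = (n : Cardinal) ↔
      ∃ k : ℕ, 1 ≤ k ∧ Mcount T (k - 1) = Mcount T k ∧
        (∀ P ∈ T.tiles, SymsExtend T k P) ∧ Mcount T k = (n : Cardinal) :=
  n_isohedral_iff_local_general d T n

end
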